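/- Let M: H → ℂ be a function on N×N Hermitian matrices that is additive (M(d₁+d₂) = M(d₁)+M(d₂)) and unitarily invariant (M(u*du) = M(d) for every unitary u). Then M(d) = 0 for every traceless Hermitian matrix d. -/

import Mathlib

/-!
Diagonalise `d = U D Uᴴ`; unitary invariance gives `M d = M D`. Conjugating `D` by the permutation
matrices of the cyclic shifts `i ↦ k + i` of the index set yields `card n` diagonal matrices with
the same value of `M`; at each diagonal position they run through all eigenvalues once, so their
sum is `(trace d) • 1 = 0`. Additivity then gives `card n • M D = M 0 = 0`.
-/

open Matrix

namespace Matrix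

variable {n R 𝕜 A : Type*}

theorem permMatrix_mem_unitaryGroup [Fintype n] [DecidableEq n] [CommRing R] [StarRing R]
    (σ : Equiv.Perm n) : σ.permMatrix R ∈ unitaryGroup n R := by
  rw [mem_unitaryGroup_iff', star_eq_conjTranspose, conjTranspose_permMatrix, ← permMatrix_mul,
    mul_inv_cancel, permMatrix_one]

theorem conjTranspose_permMatrix_mul_diagonal_mul_permMatrix [Fintype n] [DecidableEq n]
    [CommRing R] [StarRing R] (σ : Equiv.Perm n) (c : n → R) :
    (σ.permMatrix R)ᴴ * diagonal c * σ.permMatrix R = diagonal (c ∘ σ.symm) := by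
  rw [conjTranspose_permMatrix, PEquiv.toMatrix_toPEquiv_mul, PEquiv.mul_toMatrix_toPEquiv,
    submatrix_submatrix, Function.comp_id, Function.id_comp, ← Equiv.Perm.inv_def,
    submatrix_diagonal _ _ σ⁻¹.injective]

theorem sum_diagonal_comp_addLeft [Fintype n] [DecidableEq n] [AddGroup n] [AddCommMonoid R]
    (c : n → R) : ∑ k : n, diagonal (fun i => c (k + i)) = diagonal (fun _ => ∑ i, c i) := by
  ext i j
  rcases eq_or_ne i j with rfl | hij
  · simpa [Matrix.sum_apply] using Equiv.sum_comp (Equiv.addRight i) c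
  · simp [Matrix.sum_apply, hij]

theorem isHermitian_diagonal_ofReal [DecidableEq n] [RCLike 𝕜] (v : n → ℝ) :
    (diagonal (RCLike.ofReal ∘ v : n → 𝕜)).IsHermitian :=
  isHermitian_diagonal_iff.mpr fun i => RCLike.conj_ofReal (v i)

theorem map_zero_of_map_add [AddGroup A] [RCLike 𝕜] (M : Matrix n n 𝕜 → A)
    (hadd : ∀ d₁ d₂ : Matrix n n 𝕜, d₁.IsHermitian → d₂.IsHermitian →
      M (d₁ + d₂) = M d₁ + M d₂) : M 0 = 0 := by
  simpa using hadd 0 0 isHermitian_zero isHermitian_zero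

theorem map_sum_of_map_add [AddCommGroup A] [RCLike 𝕜] (M : Matrix n n 𝕜 → A)
    (hadd : ∀ d₁ d₂ : Matrix n n 𝕜, d₁.IsHermitian → d₂.IsHermitian →
      M (d₁ + d₂) = M d₁ + M d₂)
    {ι : Type*} (s : Finset ι) (f : ι → Matrix n n 𝕜) (hf : ∀ i, (f i).IsHermitian) :
    M (∑ i ∈ s, f i) = ∑ i ∈ s, M (f i) := by
  let φ : selfAdjoint (Matrix n n 𝕜) →+ A :=
    AddMonoidHom.mk' (fun d => M d) fun a b => hadd a b a.2 b.2
  have := map_sum φ (fun i => ⟨f i, hf i⟩) s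
  rwa [AddMonoidHom.mk'_apply, AddSubgroup.val_finsetSum] at this

theorem map_eq_map_diagonal_eigenvalues [Fintype n] [DecidableEq n] [RCLike 𝕜]
    (M : Matrix n n 𝕜 → A)
    (hinv : ∀ d : Matrix n n 𝕜, d.IsHermitian → ∀ u ∈ unitaryGroup n 𝕜, M (uᴴ * d * u) = M d)
    {d : Matrix n n 𝕜} (hd : d.IsHermitian) :
    M d = M (diagonal (RCLike.ofReal ∘ hd.eigenvalues)) := by
  have h := hinv _ (isHermitian_diagonal_ofReal hd.eigenvalues) _
    (Unitary.star_mem hd.eigenvectorUnitary.2)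
  rw [star_eq_conjTranspose, conjTranspose_conjTranspose] at h
  conv_lhs => rw [hd.spectral_theorem]
  exact h

theorem map_eq_zero_of_trace_eq_zero [Fintype n] [DecidableEq n] [AddGroup n] [RCLike 𝕜]
    [AddCommGroup A] [IsAddTorsionFree A] (M : Matrix n n 𝕜 → A)
    (hadd : ∀ d₁ d₂ : Matrix n n 𝕜, d₁.IsHermitian → d₂.IsHermitian →
      M (d₁ + d₂) = M d₁ + M d₂)
    (hinv : ∀ d : Matrix n n 𝕜, d.IsHermitian → ∀ u ∈ unitaryGroup n 𝕜, M (uᴴ * d * u) = M d)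
    {d : Matrix n n 𝕜} (hd : d.IsHermitian) (htr : d.trace = 0) : M d = 0 := by
  set c : n → 𝕜 := RCLike.ofReal ∘ hd.eigenvalues
  set shift : n → Matrix n n 𝕜 := fun k => diagonal (fun i => c (k + i))
  have hc : (diagonal c).IsHermitian := isHermitian_diagonal_ofReal hd.eigenvalues
  have hshift_herm (k : n) : (shift k).IsHermitian :=
    isHermitian_diagonal_ofReal (hd.eigenvalues ∘ (k + ·))
  have hshift_eq (k : n) : M (shift k) = M (diagonal c) := by
    have := hinv _ hc _ (permMatrix_mem_unitaryGroup (Equiv.addLeft k).symm)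
    rwa [conjTranspose_permMatrix_mul_diagonal_mul_permMatrix] at this
  have hsum : ∑ k, shift k = 0 := by
    have htrc : ∑ i, c i = 0 := hd.trace_eq_sum_eigenvalues.symm.trans htr
    rw [sum_diagonal_comp_addLeft, htrc, diagonal_zero]
  have : Fintype.card n • M (diagonal c) = 0 := by
    rw [← Finset.card_univ, ← Finset.sum_const, ← Finset.sum_congr rfl fun k _ => hshift_eq k,
      ← map_sum_of_map_add M hadd _ _ hshift_herm, hsum, map_zero_of_map_add M hadd]
  rw [map_eq_map_diagonal_eigenvalues M hinv hd]
  exact (smul_eq_zero.mp this).resolve_left Fintype.card_ne_zero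

end Matrix

/-- If `M` is additive on Hermitian matrices and invariant under unitary conjugation,
then `M(d) = 0` for every traceless Hermitian matrix `d`. -/
theorem stmt_6 (N : ℕ) (M : Matrix (Fin N) (Fin N) ℂ → ℂ)
    (hadd : ∀ d₁ d₂ : Matrix (Fin N) (Fin N) ℂ, d₁.IsHermitian → d₂.IsHermitian →
      M (d₁ + d₂) = M d₁ + M d₂)
    (hinv : ∀ (d : Matrix (Fin N) (Fin N) ℂ), d.IsHermitian →
      ∀ u ∈ Matrix.unitaryGroup (Fin N) ℂ, M (uᴴ * d * u) = M d)
    (d : Matrix (Fin N) (Fin N) ℂ) (hd : d.IsHermitian) (htr : d.trace = 0) :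
    M d = 0 := by
  cases N with
  | zero => rw [Subsingleton.elim d 0, map_zero_of_map_add M hadd]
  | succ N => exact map_eq_zero_of_trace_eq_zero M hadd hinv hd htr
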